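/- Let n ≥ 1, π, γ ∈ S_n, and let V, W ∈ P(n) satisfy π ≤ V, π⁻¹γ ≤ W and (2|V| − |π|) + (2|W| − |π⁻¹γ|) = 2|V ∨ W| − |γ|. Then: (i) |π| + |π⁻¹γ| + |γ| = 2|π ∨ γ|; (ii) |V ∨ 0_γ| − |π ∨ γ| = |V| − |π|; (iii) |W ∨ 0_γ| − |π ∨ γ| = |W| − |π⁻¹γ|; and (iv) (|V| − |π|) + (|W| − |π⁻¹γ|) = |V ∨ W| − |π ∨ γ|. -/

import Mathlib

open Equiv

namespace WignerPaper

/-- The setoid (partition) of the orbits of a permutation. -/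
def orbitSetoid {α : Type*} (σ : Equiv.Perm α) : Setoid α :=
  ⟨σ.SameCycle,
    ⟨fun x => Equiv.Perm.SameCycle.refl σ x, fun h => h.symm, fun h h' => h.trans h'⟩⟩

/-- The number of blocks of a partition. -/
noncomputable def numBlocks {α : Type*} (s : Setoid α) : ℕ := Nat.card (Quotient s)

/-- The number of orbits of a permutation (fixed points count as orbits). -/
noncomputable def numOrbits {α : Type*} (σ : Equiv.Perm α) : ℕ :=
  numBlocks (orbitSetoid σ)

/-- The length `|U| = n − #(U)` of a partition of `Fin n`, as an integer. -/
noncomputable def setoidLength {n : ℕ} (s : Setoid (Fin n)) : ℤ :=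
  (n : ℤ) - numBlocks s

/-- The length `|σ| = n − #(σ)` of a permutation of `Fin n`, as an integer. -/
noncomputable def permLength {n : ℕ} (σ : Equiv.Perm (Fin n)) : ℤ :=
  (n : ℤ) - numOrbits σ

/-- A pairing is a fixed-point free involution. -/
def IsPairing {α : Type*} (σ : Equiv.Perm α) : Prop := σ * σ = 1 ∧ ∀ x, σ x ≠ x

/-- The `j`-th cycle (0-indexed) of `γ_{m1,…,mr}`, as a set. -/
def cyc (ms : List ℕ) (j : ℕ) : Set (Fin ms.sum) :=
  {u | (ms.take j).sum ≤ (u : ℕ) ∧ (u : ℕ) < (ms.take (j + 1)).sum}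

/-- The permutation `γ_{m1,…,mr}` with the `r` cycles
`(1,…,m1)(m1+1,…,m1+m2)⋯(m1+⋯+m_{r−1}+1,…,m)` (here 0-indexed on `Fin (m1+⋯+mr)`). -/
def annularPerm (ms : List ℕ) : Equiv.Perm (Fin ms.sum) :=
  ((List.range ms.length).map fun j =>
    ((List.finRange ms.sum).filter fun u : Fin ms.sum =>
      decide ((ms.take j).sum ≤ (u : ℕ) ∧ (u : ℕ) < (ms.take (j + 1)).sum)).formPerm).prod

/-- The annular non-crossing pairings `NC₂(m1,…,mr)`: pairings `σ` with
`0_σ ∨ 0_γ = 1_m` and `#(σ) + #(σ⁻¹γ) = m + 2 − r`. -/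
def NC2ann (ms : List ℕ) : Set (Equiv.Perm (Fin ms.sum)) :=
  {σ | IsPairing σ ∧ orbitSetoid σ ⊔ orbitSetoid (annularPerm ms) = ⊤ ∧
    numOrbits σ + numOrbits (σ⁻¹ * annularPerm ms) + ms.length = ms.sum + 2}

/-- `|NC₂(n)|`, with the convention `|NC₂(0)| = 1`. -/
noncomputable def NC2card (n : ℕ) : ℕ :=
  if n = 0 then 1 else Nat.card ↥(NC2ann [n])

/-- The partition `π̄`: `u ∼ v` iff the edges `e_u = ([γu]_π, [u]_π)` and
`e_v = ([γv]_π, [v]_π)` join the same unordered pair of blocks of `π`. -/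
def ebar {α : Type*} (γ : Equiv.Perm α) (π : Setoid α) : Setoid α :=
  Setoid.ker fun u => Sym2.mk (Quotient.mk π (γ u), Quotient.mk π u)

/-- The edges `e_u` and `e_v` have opposite orientation:
`[u]_π = [γv]_π` and `[v]_π = [γu]_π`. -/
def OppOr {α : Type*} (γ : Equiv.Perm α) (π : Setoid α) (u v : α) : Prop :=
  π.r u (γ v) ∧ π.r v (γ u)

/-- The block of `π̄` containing `u` is exactly `{u, v}`, with `u ≠ v`. -/
def TwinBlock {α : Type*} (γ : Equiv.Perm α) (π : Setoid α) (u v : α) : Prop :=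
  u ≠ v ∧ (ebar γ π).r u v ∧ ∀ w, (ebar γ π).r u w → w = u ∨ w = v

/-- The elementarization graph: the simple graph on the blocks of `π` where distinct
blocks `A`, `B` are adjacent iff some edge `e_u` joins `A` and `B`. -/
def elemGraph {α : Type*} (γ : Equiv.Perm α) (π : Setoid α) : SimpleGraph (Quotient π) where
  Adj A B := A ≠ B ∧ ∃ u,
    (Quotient.mk π (γ u) = A ∧ Quotient.mk π u = B) ∨
    (Quotient.mk π (γ u) = B ∧ Quotient.mk π u = A)
  symm := ⟨by
    rintro A B ⟨hne, u, h⟩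
    exact ⟨hne.symm, u, h.symm⟩⟩
  loopless := ⟨by rintro A ⟨hne, -⟩; exact hne rfl⟩

/-- The smallest partition in which `u` and `v` lie in the same block. -/
def pairSetoid {α : Type*} (u v : α) : Setoid α :=
  sInf {s : Setoid α | s.r u v}

/-- Merge the block of `u` and the block of `v` in the partition `s`. -/
def mergeTwo {α : Type*} (s : Setoid α) (u v : α) : Setoid α := s ⊔ pairSetoid u v

/-- `z` and `z'` lie in a common cycle of `γ_{m1,…,mr}`. -/
def SameCycIdx (ms : List ℕ) (z z' : Fin ms.sum) : Prop :=
  ∃ j, j < ms.length ∧ z ∈ cyc ms j ∧ z' ∈ cyc ms j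

/-- The restriction of `π` to the single-cycle subset `C` is a non-crossing pairing. -/
def RestrictNC2Disc {m : ℕ} (γ π : Equiv.Perm (Fin m)) (C : Set (Fin m)) : Prop :=
  ∃ hπ : ∀ u, u ∈ C ↔ π u ∈ C,
    IsPairing (π.subtypePerm (p := (· ∈ C)) (fun u => (hπ u).symm)) ∧
    ∃ hγ : ∀ u, u ∈ C ↔ γ u ∈ C,
      numOrbits (π.subtypePerm (p := (· ∈ C)) (fun u => (hπ u).symm)) +
        numOrbits ((π.subtypePerm (p := (· ∈ C)) (fun u => (hπ u).symm))⁻¹ * γ.subtypePerm (p := (· ∈ C)) (fun u => (hγ u).symm)) = Nat.card C + 1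

/-- The restriction of `π` to the two-cycle subset `C` is an annular non-crossing pairing. -/
def RestrictNC2Ann {m : ℕ} (γ π : Equiv.Perm (Fin m)) (C : Set (Fin m)) : Prop :=
  ∃ hπ : ∀ u, u ∈ C ↔ π u ∈ C,
    IsPairing (π.subtypePerm (p := (· ∈ C)) (fun u => (hπ u).symm)) ∧
    ∃ hγ : ∀ u, u ∈ C ↔ γ u ∈ C,
      orbitSetoid (π.subtypePerm (p := (· ∈ C)) (fun u => (hπ u).symm)) ⊔ orbitSetoid (γ.subtypePerm (p := (· ∈ C)) (fun u => (hγ u).symm)) = ⊤ ∧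
      numOrbits (π.subtypePerm (p := (· ∈ C)) (fun u => (hπ u).symm)) +
        numOrbits ((π.subtypePerm (p := (· ∈ C)) (fun u => (hπ u).symm))⁻¹ * γ.subtypePerm (p := (· ∈ C)) (fun u => (hγ u).symm)) = Nat.card C

/-- The restriction of `π` to the single-cycle subset `C` is a non-crossing involution
with exactly one fixed point. -/
def RestrictNCOneFix {m : ℕ} (γ π : Equiv.Perm (Fin m)) (C : Set (Fin m)) : Prop :=
  ∃ hπ : ∀ u, u ∈ C ↔ π u ∈ C,
    (π.subtypePerm (p := (· ∈ C)) (fun u => (hπ u).symm)) * (π.subtypePerm (p := (· ∈ C)) (fun u => (hπ u).symm)) = 1 ∧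
    (∃! u : C, (π.subtypePerm (p := (· ∈ C)) (fun u => (hπ u).symm)) u = u) ∧
    ∃ hγ : ∀ u, u ∈ C ↔ γ u ∈ C,
      numOrbits (π.subtypePerm (p := (· ∈ C)) (fun u => (hπ u).symm)) +
        numOrbits ((π.subtypePerm (p := (· ∈ C)) (fun u => (hπ u).symm))⁻¹ * γ.subtypePerm (p := (· ∈ C)) (fun u => (hγ u).symm)) = Nat.card C + 1

/-- `PS^{(1,1,1)}_{NC₂}(m1,m2,m3)`: pairs `(V,π)` where `π` restricts to a non-crossing
pairing on each cycle and `V` merges one block of each of the three restrictions. -/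
def PS111 (m1 m2 m3 : ℕ) :
    Set (Setoid (Fin ([m1, m2, m3] : List ℕ).sum) ×
         Equiv.Perm (Fin ([m1, m2, m3] : List ℕ).sum)) :=
  {Vπ | IsPairing Vπ.2 ∧
    (∀ j, j < 3 → RestrictNC2Disc (annularPerm [m1, m2, m3]) Vπ.2 (cyc [m1, m2, m3] j)) ∧
    ∃ u1 ∈ cyc [m1, m2, m3] 0, ∃ u2 ∈ cyc [m1, m2, m3] 1, ∃ u3 ∈ cyc [m1, m2, m3] 2,
      Vπ.1 = mergeTwo (mergeTwo (orbitSetoid Vπ.2) u1 u2) u2 u3}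

/-- `PS^{(2,1,1)}_{NC₂}(m1,m2,m3)`: pairs `(V,π)` where `π` restricts to a non-crossing
pairing on each cycle and `V` merges two disjoint pairs of blocks of `π`, each pair
lying inside two different cycles, with `V ∨ 0_γ = 1_m`. -/
def PS211 (m1 m2 m3 : ℕ) :
    Set (Setoid (Fin ([m1, m2, m3] : List ℕ).sum) ×
         Equiv.Perm (Fin ([m1, m2, m3] : List ℕ).sum)) :=
  {Vπ | IsPairing Vπ.2 ∧
    (∀ j, j < 3 → RestrictNC2Disc (annularPerm [m1, m2, m3]) Vπ.2 (cyc [m1, m2, m3] j)) ∧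
    ∃ u1 v1 u2 v2,
      (∃ j j', j < 3 ∧ j' < 3 ∧ j ≠ j' ∧ u1 ∈ cyc [m1, m2, m3] j ∧ v1 ∈ cyc [m1, m2, m3] j') ∧
      (∃ j j', j < 3 ∧ j' < 3 ∧ j ≠ j' ∧ u2 ∈ cyc [m1, m2, m3] j ∧ v2 ∈ cyc [m1, m2, m3] j') ∧
      ¬ (orbitSetoid Vπ.2).r u1 u2 ∧ ¬ (orbitSetoid Vπ.2).r u1 v2 ∧
      ¬ (orbitSetoid Vπ.2).r v1 u2 ∧ ¬ (orbitSetoid Vπ.2).r v1 v2 ∧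
      Vπ.1 = mergeTwo (mergeTwo (orbitSetoid Vπ.2) u1 v1) u2 v2 ∧
      Vπ.1 ⊔ orbitSetoid (annularPerm [m1, m2, m3]) = ⊤}

/-- `PS^{(1,1)}_{NC₂}(m1,m2,m3)`: pairs `(V,π)` where `π` restricts to an annular
non-crossing pairing on a union of two cycles and a non-crossing pairing on the third,
and `V` merges one block of each of the two restrictions. -/
def PS11 (m1 m2 m3 : ℕ) :
    Set (Setoid (Fin ([m1, m2, m3] : List ℕ).sum) ×
         Equiv.Perm (Fin ([m1, m2, m3] : List ℕ).sum)) :=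
  {Vπ | ∃ i1 i2 i3 : ℕ, i1 < 3 ∧ i2 < 3 ∧ i3 < 3 ∧ i1 ≠ i2 ∧ i1 ≠ i3 ∧ i2 ≠ i3 ∧
    IsPairing Vπ.2 ∧
    RestrictNC2Ann (annularPerm [m1, m2, m3]) Vπ.2
      (cyc [m1, m2, m3] i1 ∪ cyc [m1, m2, m3] i2) ∧
    RestrictNC2Disc (annularPerm [m1, m2, m3]) Vπ.2 (cyc [m1, m2, m3] i3) ∧
    ∃ u ∈ cyc [m1, m2, m3] i1 ∪ cyc [m1, m2, m3] i2, ∃ v ∈ cyc [m1, m2, m3] i3,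
      Vπ.1 = mergeTwo (orbitSetoid Vπ.2) u v}

/-- `PS^{(1,1)}_{NC₂^{(2)}}(m1,m2,m3)`: elements of `PS^{(1,1)}_{NC₂}` whose annular
part has exactly two through strings. -/
def PS11TwoTS (m1 m2 m3 : ℕ) :
    Set (Setoid (Fin ([m1, m2, m3] : List ℕ).sum) ×
         Equiv.Perm (Fin ([m1, m2, m3] : List ℕ).sum)) :=
  {Vπ | ∃ i1 i2 i3 : ℕ, i1 < 3 ∧ i2 < 3 ∧ i3 < 3 ∧ i1 ≠ i2 ∧ i1 ≠ i3 ∧ i2 ≠ i3 ∧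
    IsPairing Vπ.2 ∧
    RestrictNC2Ann (annularPerm [m1, m2, m3]) Vπ.2
      (cyc [m1, m2, m3] i1 ∪ cyc [m1, m2, m3] i2) ∧
    RestrictNC2Disc (annularPerm [m1, m2, m3]) Vπ.2 (cyc [m1, m2, m3] i3) ∧
    Nat.card {w : Fin ([m1, m2, m3] : List ℕ).sum //
      w ∈ cyc [m1, m2, m3] i1 ∧ Vπ.2 w ∈ cyc [m1, m2, m3] i2} = 2 ∧
    ∃ u ∈ cyc [m1, m2, m3] i1 ∪ cyc [m1, m2, m3] i2, ∃ v ∈ cyc [m1, m2, m3] i3,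
      Vπ.1 = mergeTwo (orbitSetoid Vπ.2) u v}

/-- `PS^{(1,1)(t)}_{NC₂}(m1,m2,m3)`: elements of `PS^{(1,1)}_{NC₂}` whose annular part
has exactly one through string, the merged block of `V` consisting of that through
string together with a block of the disc part. -/
def PS11t (m1 m2 m3 : ℕ) :
    Set (Setoid (Fin ([m1, m2, m3] : List ℕ).sum) ×
         Equiv.Perm (Fin ([m1, m2, m3] : List ℕ).sum)) :=
  {Vπ | ∃ i1 i2 i3 : ℕ, i1 < 3 ∧ i2 < 3 ∧ i3 < 3 ∧ i1 ≠ i2 ∧ i1 ≠ i3 ∧ i2 ≠ i3 ∧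
    IsPairing Vπ.2 ∧
    RestrictNC2Ann (annularPerm [m1, m2, m3]) Vπ.2
      (cyc [m1, m2, m3] i1 ∪ cyc [m1, m2, m3] i2) ∧
    RestrictNC2Disc (annularPerm [m1, m2, m3]) Vπ.2 (cyc [m1, m2, m3] i3) ∧
    Nat.card {w : Fin ([m1, m2, m3] : List ℕ).sum //
      w ∈ cyc [m1, m2, m3] i1 ∧ Vπ.2 w ∈ cyc [m1, m2, m3] i2} = 1 ∧
    ∃ u, u ∈ cyc [m1, m2, m3] i1 ∧ Vπ.2 u ∈ cyc [m1, m2, m3] i2 ∧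
      ∃ v ∈ cyc [m1, m2, m3] i3, Vπ.1 = mergeTwo (orbitSetoid Vπ.2) u v}

/-- `PS^{(1,1,1)}_{NC_{2,1,1}}(m1,m2,m3)`: pairs `(V,π)` where `π` is an involution
restricting to a non-crossing involution with exactly one fixed point on two of the
cycles and a non-crossing pairing on the third, and `V` merges the two fixed points
together with one block of the pairing part into a single block. -/
def PS111Loop (m1 m2 m3 : ℕ) :
    Set (Setoid (Fin ([m1, m2, m3] : List ℕ).sum) ×
         Equiv.Perm (Fin ([m1, m2, m3] : List ℕ).sum)) :=
  {Vπ | ∃ i1 i2 i3 : ℕ, i1 < 3 ∧ i2 < 3 ∧ i3 < 3 ∧ i1 ≠ i2 ∧ i1 ≠ i3 ∧ i2 ≠ i3 ∧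
    Vπ.2 * Vπ.2 = 1 ∧
    RestrictNCOneFix (annularPerm [m1, m2, m3]) Vπ.2 (cyc [m1, m2, m3] i1) ∧
    RestrictNCOneFix (annularPerm [m1, m2, m3]) Vπ.2 (cyc [m1, m2, m3] i2) ∧
    RestrictNC2Disc (annularPerm [m1, m2, m3]) Vπ.2 (cyc [m1, m2, m3] i3) ∧
    ∃ f1 ∈ cyc [m1, m2, m3] i1, Vπ.2 f1 = f1 ∧
      ∃ f2 ∈ cyc [m1, m2, m3] i2, Vπ.2 f2 = f2 ∧
        ∃ w ∈ cyc [m1, m2, m3] i3,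
          Vπ.1 = mergeTwo (mergeTwo (orbitSetoid Vπ.2) f1 f2) f2 w}

/-- `π` is a double tree partition: no loops, every block of `π̄` consists of exactly
two elements whose edges have opposite orientation, and the elementarization graph
is a tree. -/
def IsDoubleTree {α : Type*} (γ : Equiv.Perm α) (π : Setoid α) : Prop :=
  (∀ u, ¬ π.r (γ u) u) ∧
  (∀ u, ∃ v, TwinBlock γ π u v ∧ OppOr γ π u v) ∧
  (elemGraph γ π).IsTree

/-- `π` is a double uniloop partition: exactly two elements `u ≠ v` have loop edges,
these lie at the same vertex, every other block of `π̄` consists of exactly two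
elements whose edges are non-loops of opposite orientation, and the elementarization
graph is a tree. -/
def IsDoubleUniloop {α : Type*} (γ : Equiv.Perm α) (π : Setoid α) : Prop :=
  (∃ u v, u ≠ v ∧ π.r (γ u) u ∧ π.r (γ v) v ∧ π.r u v ∧
    (∀ w, π.r (γ w) w → w = u ∨ w = v) ∧
    (∀ w, w ≠ u → w ≠ v → ∃ w', TwinBlock γ π w w' ∧
      ¬ π.r (γ w) w ∧ ¬ π.r (γ w') w' ∧ OppOr γ π w w')) ∧
  (elemGraph γ π).IsTree

/-- `π` is of 2-6 tree type. -/
def Is26TreeType (m1 m2 m3 : ℕ) (π : Setoid (Fin ([m1, m2, m3] : List ℕ).sum)) : Prop :=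
  (∀ u, ¬ π.r (annularPerm [m1, m2, m3] u) u) ∧
  (∃ u1 u2 v1 v2 w1 w2 : Fin ([m1, m2, m3] : List ℕ).sum,
    u1 ≠ u2 ∧ v1 ≠ v2 ∧ w1 ≠ w2 ∧
    u1 ∈ cyc [m1, m2, m3] 0 ∧ u2 ∈ cyc [m1, m2, m3] 0 ∧
    v1 ∈ cyc [m1, m2, m3] 1 ∧ v2 ∈ cyc [m1, m2, m3] 1 ∧
    w1 ∈ cyc [m1, m2, m3] 2 ∧ w2 ∈ cyc [m1, m2, m3] 2 ∧
    (ebar (annularPerm [m1, m2, m3]) π).r u1 u2 ∧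
    (ebar (annularPerm [m1, m2, m3]) π).r u1 v1 ∧
    (ebar (annularPerm [m1, m2, m3]) π).r u1 v2 ∧
    (ebar (annularPerm [m1, m2, m3]) π).r u1 w1 ∧
    (ebar (annularPerm [m1, m2, m3]) π).r u1 w2 ∧
    (∀ z, (ebar (annularPerm [m1, m2, m3]) π).r u1 z →
      z = u1 ∨ z = u2 ∨ z = v1 ∨ z = v2 ∨ z = w1 ∨ z = w2) ∧
    OppOr (annularPerm [m1, m2, m3]) π u1 u2 ∧
    OppOr (annularPerm [m1, m2, m3]) π v1 v2 ∧
    OppOr (annularPerm [m1, m2, m3]) π w1 w2 ∧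
    (∀ z, z ≠ u1 → z ≠ u2 → z ≠ v1 → z ≠ v2 → z ≠ w1 → z ≠ w2 →
      ∃ z', TwinBlock (annularPerm [m1, m2, m3]) π z z' ∧
        SameCycIdx [m1, m2, m3] z z' ∧ OppOr (annularPerm [m1, m2, m3]) π z z')) ∧
  (elemGraph (annularPerm [m1, m2, m3]) π).IsTree

/-- `π` is of 2-4-4 tree type. -/
def Is244TreeType (m1 m2 m3 : ℕ) (π : Setoid (Fin ([m1, m2, m3] : List ℕ).sum)) : Prop :=
  (∀ u, ¬ π.r (annularPerm [m1, m2, m3] u) u) ∧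
  (∃ (a b c d : ℕ) (u1 u2 v1 v2 u3 u4 v3 v4 : Fin ([m1, m2, m3] : List ℕ).sum),
    a < 3 ∧ b < 3 ∧ a ≠ b ∧ c < 3 ∧ d < 3 ∧ c ≠ d ∧
    u1 ≠ u2 ∧ v1 ≠ v2 ∧ u3 ≠ u4 ∧ v3 ≠ v4 ∧
    u1 ∈ cyc [m1, m2, m3] a ∧ u2 ∈ cyc [m1, m2, m3] a ∧
    v1 ∈ cyc [m1, m2, m3] b ∧ v2 ∈ cyc [m1, m2, m3] b ∧
    u3 ∈ cyc [m1, m2, m3] c ∧ u4 ∈ cyc [m1, m2, m3] c ∧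
    v3 ∈ cyc [m1, m2, m3] d ∧ v4 ∈ cyc [m1, m2, m3] d ∧
    (ebar (annularPerm [m1, m2, m3]) π).r u1 u2 ∧
    (ebar (annularPerm [m1, m2, m3]) π).r u1 v1 ∧
    (ebar (annularPerm [m1, m2, m3]) π).r u1 v2 ∧
    (∀ z, (ebar (annularPerm [m1, m2, m3]) π).r u1 z →
      z = u1 ∨ z = u2 ∨ z = v1 ∨ z = v2) ∧
    (ebar (annularPerm [m1, m2, m3]) π).r u3 u4 ∧
    (ebar (annularPerm [m1, m2, m3]) π).r u3 v3 ∧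
    (ebar (annularPerm [m1, m2, m3]) π).r u3 v4 ∧
    (∀ z, (ebar (annularPerm [m1, m2, m3]) π).r u3 z →
      z = u3 ∨ z = u4 ∨ z = v3 ∨ z = v4) ∧
    ¬ (ebar (annularPerm [m1, m2, m3]) π).r u1 u3 ∧
    OppOr (annularPerm [m1, m2, m3]) π u1 u2 ∧
    OppOr (annularPerm [m1, m2, m3]) π v1 v2 ∧
    OppOr (annularPerm [m1, m2, m3]) π u3 u4 ∧
    OppOr (annularPerm [m1, m2, m3]) π v3 v4 ∧
    (∀ z, z ≠ u1 → z ≠ u2 → z ≠ v1 → z ≠ v2 → z ≠ u3 → z ≠ u4 → z ≠ v3 → z ≠ v4 →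
      ∃ z', TwinBlock (annularPerm [m1, m2, m3]) π z z' ∧
        SameCycIdx [m1, m2, m3] z z' ∧ OppOr (annularPerm [m1, m2, m3]) π z z')) ∧
  (ebar (annularPerm [m1, m2, m3]) π ⊔ orbitSetoid (annularPerm [m1, m2, m3]) = ⊤) ∧
  (elemGraph (annularPerm [m1, m2, m3]) π).IsTree

/-- The transposition exchanging the two entries of an unordered pair. -/
def sym2Swap {α : Type*} [DecidableEq α] : Sym2 α → Equiv.Perm α :=
  Sym2.lift ⟨fun a b => Equiv.swap a b, fun a b => Equiv.swap_comm a b⟩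

section Aux

open Equiv.Perm

variable {n : ℕ}

lemma pair_rel {α : Type*} (u v : α) : (pairSetoid u v).r u v := fun _ hs => hs

lemma pair_le {α : Type*} {u v : α} {s : Setoid α} (h : s.r u v) : pairSetoid u v ≤ s :=
  sInf_le h

lemma rel_sup_left {α : Type*} {s t : Setoid α} {x y : α} (h : s.r x y) : (s ⊔ t).r x y :=
  (le_sup_left : s ≤ s ⊔ t) h

lemma rel_sup_right {α : Type*} {s t : Setoid α} {x y : α} (h : t.r x y) : (s ⊔ t).r x y :=
  (le_sup_right : t ≤ s ⊔ t) h

/-- Monotonicity: a coarser partition has at most as many blocks. -/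
lemma numBlocks_le_of_le {s t : Setoid (Fin n)} (h : s ≤ t) : numBlocks t ≤ numBlocks s := by
  apply Nat.card_le_card_of_surjective (Quotient.map' (fun x => x) h)
  intro q
  obtain ⟨x, rfl⟩ := Quotient.exists_rep q
  exact ⟨Quotient.mk _ x, rfl⟩

lemma numBlocks_le_card (s : Setoid (Fin n)) : numBlocks s ≤ n := by
  have := Nat.card_le_card_of_surjective (Quotient.mk s) (fun q => Quotient.exists_rep q)
  simpa [numBlocks] using this

/-- Merging the blocks of `u` and `v` loses at most one block. -/
lemma merge_lower (C : Setoid (Fin n)) (u v : Fin n) :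
    numBlocks C ≤ numBlocks (C ⊔ pairSetoid u v) + 1 := by
  classical
  set p := pairSetoid u v with hp
  have hker : C ⊔ p ≤ Setoid.ker (fun x => if C x v then (Quotient.mk C u) else Quotient.mk C x) := by
    apply sup_le
    · intro x y hxy
      show (if C x v then (Quotient.mk C u) else Quotient.mk C x)
          = (if C y v then (Quotient.mk C u) else Quotient.mk C y)
      by_cases hxv : C x v
      · rw [if_pos hxv, if_pos (C.trans' (C.symm' hxy) hxv)]
      · rw [if_neg hxv, if_neg (fun hyv => hxv (C.trans' hxy hyv)), Quotient.sound hxy]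
    · apply pair_le
      show (if C u v then (Quotient.mk C u) else Quotient.mk C u)
          = (if C v v then (Quotient.mk C u) else Quotient.mk C v)
      rw [if_pos (C.refl' v)]
      by_cases huv : C u v
      · rw [if_pos huv]
      · rw [if_neg huv]
  set f : Quotient (C ⊔ p) → Quotient C :=
    Quotient.lift (fun x => if C x v then (Quotient.mk C u) else Quotient.mk C x)
      (fun a b hab => hker hab) with hf
  have hsurj : Function.Surjective
      (fun z : Quotient (C ⊔ p) ⊕ Unit => Sum.elim f (fun _ => Quotient.mk C v) z) := by
    intro q
    obtain ⟨x, rfl⟩ := Quotient.exists_rep q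
    by_cases hxv : C x v
    · exact ⟨Sum.inr ⟨⟩, (Quotient.sound (C.symm' hxv))⟩
    · refine ⟨Sum.inl (Quotient.mk _ x), ?_⟩
      show (if C x v then (Quotient.mk C u) else Quotient.mk C x) = Quotient.mk C x
      rw [if_neg hxv]
  have := Nat.card_le_card_of_surjective _ hsurj
  simpa [numBlocks, Nat.card_sum] using this

/-- If a coarsening identifies two previously-distinct blocks, it loses at least one block. -/
lemma numBlocks_add_one_le {s t : Setoid (Fin n)} (h : s ≤ t) {u v : Fin n}
    (huv : t.r u v) (hnuv : ¬ s u v) : numBlocks t + 1 ≤ numBlocks s := by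
  classical
  have hker : s ≤ Setoid.ker (fun x : Fin n =>
      if s x v then (Sum.inr ⟨⟩ : Quotient t ⊕ Unit) else Sum.inl (Quotient.mk t x)) := by
    intro x y hxy
    show (if s x v then (Sum.inr ⟨⟩ : Quotient t ⊕ Unit) else Sum.inl (Quotient.mk t x))
        = (if s y v then (Sum.inr ⟨⟩ : Quotient t ⊕ Unit) else Sum.inl (Quotient.mk t y))
    by_cases hxv : s x v
    · rw [if_pos hxv, if_pos (s.trans' (s.symm' hxy) hxv)]
    · rw [if_neg hxv, if_neg (fun hyv => hxv (s.trans' hxy hyv)), Quotient.sound (h hxy)]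
  set f : Quotient s → Quotient t ⊕ Unit :=
    Quotient.lift _ (fun a b hab => hker hab) with hf
  have hsurj : Function.Surjective f := by
    rintro (q | val)
    · obtain ⟨x, rfl⟩ := Quotient.exists_rep q
      by_cases hxv : s x v
      · refine ⟨Quotient.mk _ u, ?_⟩
        show (if s u v then (Sum.inr ⟨⟩ : Quotient t ⊕ Unit) else Sum.inl (Quotient.mk t u))
            = Sum.inl (Quotient.mk t x)
        rw [if_neg hnuv]
        exact congrArg Sum.inl (Quotient.sound (t.trans' huv (t.symm' (h hxv))))
      · refine ⟨Quotient.mk _ x, ?_⟩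
        show (if s x v then (Sum.inr ⟨⟩ : Quotient t ⊕ Unit) else Sum.inl (Quotient.mk t x))
            = Sum.inl (Quotient.mk t x)
        rw [if_neg hxv]
    · refine ⟨Quotient.mk _ v, ?_⟩
      show (if s v v then (Sum.inr ⟨⟩ : Quotient t ⊕ Unit) else Sum.inl (Quotient.mk t v))
          = Sum.inr val
      rw [if_pos (s.refl' v)]
  have := Nat.card_le_card_of_surjective _ hsurj
  simpa [numBlocks, Nat.card_sum] using this

/-- If `s` relates every point to its image under `f`, then `s` is coarser than
the orbit partition of `f`. -/
lemma orbit_le {α : Type*} {f : Equiv.Perm α} {s : Setoid α} (h : ∀ x, s.r x (f x)) :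
    orbitSetoid f ≤ s := by
  intro x y hxy
  obtain ⟨k, hk⟩ := hxy
  have H : ∀ k : ℤ, s.r x ((f ^ k) x) := by
    intro k
    induction k using Int.induction_on with
    | zero => exact s.refl' x
    | succ i ih =>
        have e : (f ^ ((i : ℤ) + 1)) x = f ((f ^ (i : ℤ)) x) := by
          rw [add_comm, zpow_add, zpow_one]; rfl
        rw [e]; exact s.trans' ih (h _)
    | pred i ih =>
        have e : (f ^ (-(i : ℤ) - 1)) x = f⁻¹ ((f ^ (-(i : ℤ))) x) := by
          rw [sub_eq_add_neg, add_comm, zpow_add, zpow_neg_one]; rfl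
        have h2 : s.r ((f ^ (-(i : ℤ))) x) (f⁻¹ ((f ^ (-(i : ℤ))) x)) := by
          have := h (f⁻¹ ((f ^ (-(i : ℤ))) x))
          rw [show f (f⁻¹ ((f ^ (-(i : ℤ))) x)) = (f ^ (-(i : ℤ))) x from Equiv.apply_symm_apply f _] at this
          exact s.symm' this
        rw [e]; exact s.trans' ih h2
  exact hk ▸ H k

lemma sameCycle_step {α : Type*} (f : Equiv.Perm α) (x : α) : f.SameCycle x (f x) :=
  ⟨1, by simp⟩

lemma orbit_mul_le {α : Type*} (σ τ : Equiv.Perm α) :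
    orbitSetoid (σ * τ) ≤ orbitSetoid σ ⊔ orbitSetoid τ := by
  apply orbit_le
  intro x
  have h1 : (orbitSetoid σ ⊔ orbitSetoid τ).r x (τ x) := rel_sup_right (sameCycle_step τ x)
  have h2 : (orbitSetoid σ ⊔ orbitSetoid τ).r (τ x) (σ (τ x)) :=
    rel_sup_left (sameCycle_step σ (τ x))
  exact (orbitSetoid σ ⊔ orbitSetoid τ).trans' h1 h2

lemma orbit_inv {α : Type*} (σ : Equiv.Perm α) : orbitSetoid σ⁻¹ = orbitSetoid σ :=
  Setoid.ext fun _ _ => Equiv.Perm.sameCycle_inv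

lemma orbit_swap_le_pair {α : Type*} [DecidableEq α] (a b : α) :
    orbitSetoid (Equiv.swap a b) ≤ pairSetoid a b := by
  apply orbit_le
  intro x
  rcases eq_or_ne x a with rfl | hxa
  · rw [Equiv.swap_apply_left]; exact pair_rel x b
  · rcases eq_or_ne x b with rfl | hxb
    · rw [Equiv.swap_apply_right]; exact (pairSetoid a x).symm' (pair_rel a x)
    · rw [Equiv.swap_apply_of_ne_of_ne hxa hxb]

lemma orbit_swap_mul_le {α : Type*} [DecidableEq α] (ρ : Equiv.Perm α) (a b : α) :
    orbitSetoid (Equiv.swap a b * ρ) ≤ orbitSetoid ρ ⊔ pairSetoid a b :=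
  (orbit_mul_le _ _).trans (sup_le ((orbit_swap_le_pair a b).trans le_sup_right) le_sup_left)

lemma orbit_le_swap_mul {α : Type*} [DecidableEq α] (ρ : Equiv.Perm α) (a b : α) :
    orbitSetoid ρ ≤ orbitSetoid (Equiv.swap a b * ρ) ⊔ pairSetoid a b := by
  have h : ρ = Equiv.swap a b * (Equiv.swap a b * ρ) := by
    rw [← mul_assoc, Equiv.swap_mul_self, one_mul]
  calc orbitSetoid ρ = orbitSetoid (Equiv.swap a b * (Equiv.swap a b * ρ)) := by rw [← h]
    _ ≤ orbitSetoid (Equiv.swap a b) ⊔ orbitSetoid (Equiv.swap a b * ρ) := orbit_mul_le _ _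
    _ ≤ orbitSetoid (Equiv.swap a b * ρ) ⊔ pairSetoid a b :=
        sup_le ((orbit_swap_le_pair a b).trans le_sup_right) le_sup_left

lemma fixed_sameCycle {α : Type*} {f : Equiv.Perm α} {x y : α} (hx : f x = x)
    (h : f.SameCycle x y) : y = x := by
  obtain ⟨k, hk⟩ := h
  rw [Equiv.Perm.zpow_apply_eq_self_of_apply_eq_self hx k] at hk
  exact hk.symm

lemma numOrbits_one : numOrbits (1 : Equiv.Perm (Fin n)) = n := by
  have hbij : Function.Bijective (Quotient.mk (orbitSetoid (1 : Equiv.Perm (Fin n)))) := by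
    constructor
    · intro x y hxy
      exact Equiv.Perm.sameCycle_one.mp (Quotient.exact hxy)
    · exact fun q => Quotient.exists_rep q
  have := Nat.card_eq_of_bijective _ hbij
  simp only [numOrbits, numBlocks, ← this, Nat.card_eq_fintype_card, Fintype.card_fin]

lemma eq_one_of_numOrbits {σ : Equiv.Perm (Fin n)} (h : n ≤ numOrbits σ) : σ = 1 := by
  classical
  letI : Fintype (Quotient (orbitSetoid σ)) := Fintype.ofFinite _
  have hcard : Fintype.card (Fin n) = Fintype.card (Quotient (orbitSetoid σ)) := by
    have h1 : numOrbits σ ≤ n := numBlocks_le_card _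
    have : numOrbits σ = n := le_antisymm h1 h
    simp only [Fintype.card_fin]
    rw [← Nat.card_eq_fintype_card]
    exact this.symm
  have hbij : Function.Bijective (Quotient.mk (orbitSetoid σ)) :=
    (Fintype.bijective_iff_surjective_and_card _).mpr ⟨fun q => Quotient.exists_rep q, hcard⟩
  ext x
  have : Quotient.mk (orbitSetoid σ) x = Quotient.mk (orbitSetoid σ) (σ x) :=
    Quotient.sound (sameCycle_step σ x)
  exact congrArg Fin.val (hbij.1 this).symm

/-- Splitting with a swap of a point and its image: the orbit count goes up by one. -/
lemma numOrbits_swap_apply_mul (σ : Equiv.Perm (Fin n)) {a : Fin n} (ha : σ a ≠ a) :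
    numOrbits (Equiv.swap a (σ a) * σ) = numOrbits σ + 1 := by
  set σ' := Equiv.swap a (σ a) * σ with hσ'
  have hfix : σ' a = a := by
    simp [hσ', Equiv.swap_apply_right]
  have hpairle : pairSetoid a (σ a) ≤ orbitSetoid σ := pair_le (sameCycle_step σ a)
  have hle : orbitSetoid σ' ≤ orbitSetoid σ :=
    (orbit_swap_mul_le σ a (σ a)).trans (sup_le le_rfl hpairle)
  have hrel : (orbitSetoid σ).r a (σ a) := sameCycle_step σ a
  have hnrel : ¬ (orbitSetoid σ').r a (σ a) := fun h => ha (fixed_sameCycle hfix h)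
  have h1 : numOrbits σ + 1 ≤ numOrbits σ' := numBlocks_add_one_le hle hrel hnrel
  have h2 : numBlocks (orbitSetoid σ' ⊔ pairSetoid a (σ a)) ≤ numBlocks (orbitSetoid σ) := by
    have h5 := numBlocks_le_of_le (orbit_le_swap_mul σ a (σ a))
    rwa [← hσ'] at h5
  have h4 := merge_lower (orbitSetoid σ') a (σ a)
  simp only [numOrbits] at h1 ⊢
  omega

/-- Parity of the number of orbits is determined by the sign. -/
lemma parity_aux : ∀ (k : ℕ) (σ : Equiv.Perm (Fin n)), n ≤ numOrbits σ + k →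
    ((Equiv.Perm.sign σ : ℤˣ) : ℤ) * (-1) ^ (numOrbits σ) = (-1) ^ n := by
  intro k
  induction k with
  | zero =>
      intro σ hσ
      have h1 : σ = 1 := eq_one_of_numOrbits (by omega)
      subst h1
      rw [numOrbits_one]
      simp
  | succ k ih =>
      intro σ hσ
      by_cases h1 : σ = 1
      · subst h1; rw [numOrbits_one]; simp
      · have ⟨a, ha⟩ : ∃ a, σ a ≠ a := by
          by_contra hc
          push_neg at hc
          exact h1 (Equiv.ext hc)
        have hsplit := numOrbits_swap_apply_mul σ ha
        have hIH := ih (Equiv.swap a (σ a) * σ) (by omega)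
        rw [hsplit] at hIH
        rw [Equiv.Perm.sign_mul, Equiv.Perm.sign_swap (Ne.symm ha)] at hIH
        push_cast at hIH
        rw [← hIH, pow_succ]
        ring

lemma parity (σ : Equiv.Perm (Fin n)) :
    ((Equiv.Perm.sign σ : ℤˣ) : ℤ) * (-1) ^ (numOrbits σ) = (-1) ^ n :=
  parity_aux n σ (by omega)

lemma numOrbits_swap_mul_ne (ρ : Equiv.Perm (Fin n)) {a b : Fin n} (hab : a ≠ b) :
    numOrbits (Equiv.swap a b * ρ) ≠ numOrbits ρ := by
  intro h
  have h1 := parity ρ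
  have h2 := parity (Equiv.swap a b * ρ)
  rw [h, Equiv.Perm.sign_mul, Equiv.Perm.sign_swap hab] at h2
  push_cast at h2
  rw [h1.symm] at h2
  have h3 : ((Equiv.Perm.sign ρ : ℤˣ) : ℤ) * (-1) ^ numOrbits ρ ≠ 0 :=
    mul_ne_zero (Units.ne_zero _) (pow_ne_zero _ (by norm_num))
  apply h3
  linarith [h2]

/-- Splitting: multiplying by a swap of two points of the same cycle separates them. -/
lemma not_sameCycle_swap_mul {ρ : Equiv.Perm (Fin n)} {a b : Fin n} (hab : a ≠ b)
    (h : ρ.SameCycle a b) : ¬ (Equiv.swap a b * ρ).SameCycle a b := by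
  intro h2
  have e : orbitSetoid (Equiv.swap a b * ρ) = orbitSetoid ρ :=
    le_antisymm ((orbit_swap_mul_le ρ a b).trans (sup_le le_rfl (pair_le h)))
      ((orbit_le_swap_mul ρ a b).trans (sup_le le_rfl (pair_le h2)))
  exact numOrbits_swap_mul_ne ρ hab (by rw [numOrbits, numOrbits, e])

/-- Merging: multiplying by a swap of two points in distinct cycles joins them. -/
lemma sameCycle_swap_mul {ρ : Equiv.Perm (Fin n)} {a b : Fin n} (hab : a ≠ b)
    (h : ¬ ρ.SameCycle a b) : (Equiv.swap a b * ρ).SameCycle a b := by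
  by_contra h2
  have e : orbitSetoid ρ ⊔ pairSetoid a b = orbitSetoid (Equiv.swap a b * ρ) ⊔ pairSetoid a b :=
    le_antisymm (sup_le (orbit_le_swap_mul ρ a b) le_sup_right)
      (sup_le (orbit_swap_mul_le ρ a b) le_sup_right)
  have hrel : (orbitSetoid ρ ⊔ pairSetoid a b).r a b := rel_sup_right (pair_rel a b)
  have hrel' : (orbitSetoid (Equiv.swap a b * ρ) ⊔ pairSetoid a b).r a b :=
    rel_sup_right (pair_rel a b)
  have c1 := numBlocks_add_one_le (le_sup_left : orbitSetoid ρ ≤ _) hrel h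
  have c2 := numBlocks_add_one_le (le_sup_left : orbitSetoid (Equiv.swap a b * ρ) ≤ _) hrel' h2
  have c3 := merge_lower (orbitSetoid ρ) a b
  have c4 := merge_lower (orbitSetoid (Equiv.swap a b * ρ)) a b
  refine numOrbits_swap_mul_ne ρ hab ?_
  simp only [numOrbits]
  rw [e] at c1 c3
  omega

lemma numOrbits_swap_mul_split {ρ : Equiv.Perm (Fin n)} {a b : Fin n} (hab : a ≠ b)
    (h : ρ.SameCycle a b) : numOrbits (Equiv.swap a b * ρ) = numOrbits ρ + 1 := by
  have hle : orbitSetoid (Equiv.swap a b * ρ) ≤ orbitSetoid ρ :=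
    (orbit_swap_mul_le ρ a b).trans (sup_le le_rfl (pair_le h))
  have h1 := numBlocks_add_one_le hle h (not_sameCycle_swap_mul hab h)
  have h2 : numBlocks (orbitSetoid (Equiv.swap a b * ρ) ⊔ pairSetoid a b) ≤
      numBlocks (orbitSetoid ρ) := numBlocks_le_of_le (orbit_le_swap_mul ρ a b)
  have h4 := merge_lower (orbitSetoid (Equiv.swap a b * ρ)) a b
  simp only [numOrbits]
  omega

lemma numOrbits_swap_mul_merge {ρ : Equiv.Perm (Fin n)} {a b : Fin n} (hab : a ≠ b)
    (h : ¬ ρ.SameCycle a b) : numOrbits (Equiv.swap a b * ρ) + 1 = numOrbits ρ := by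
  have hle : orbitSetoid ρ ≤ orbitSetoid (Equiv.swap a b * ρ) :=
    (orbit_le_swap_mul ρ a b).trans (sup_le le_rfl (pair_le (sameCycle_swap_mul hab h)))
  have h1 := numBlocks_add_one_le hle (sameCycle_swap_mul hab h) h
  have h2 : numBlocks (orbitSetoid ρ ⊔ pairSetoid a b) ≤
      numBlocks (orbitSetoid (Equiv.swap a b * ρ)) := numBlocks_le_of_le (orbit_swap_mul_le ρ a b)
  have h4 := merge_lower (orbitSetoid ρ) a b
  simp only [numOrbits]
  omega

def joinPairs {α : Type*} : List (α × α) → Setoid α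
  | [] => ⊥
  | p :: L => pairSetoid p.1 p.2 ⊔ joinPairs L

lemma joinPairs_le {α : Type*} {B : Setoid α} :
    ∀ {L : List (α × α)}, (∀ p ∈ L, B.r p.1 p.2) → joinPairs L ≤ B
  | [], _ => bot_le
  | p :: L, h => sup_le (pair_le (h p (List.mem_cons_self)))
      (joinPairs_le fun q hq => h q (List.mem_cons_of_mem p hq))

lemma pair_le_joinPairs {α : Type*} :
    ∀ {L : List (α × α)} {p : α × α}, p ∈ L → pairSetoid p.1 p.2 ≤ joinPairs L := by
  intro L
  induction L with
  | nil => intro p hp; cases hp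
  | cons q L ih =>
      intro p hp
      rcases List.mem_cons.mp hp with rfl | hp
      · exact le_sup_left
      · exact (ih hp).trans le_sup_right

lemma merge_step (C Q : Setoid (Fin n)) (u v : Fin n) :
    numBlocks (C ⊔ pairSetoid u v) + numBlocks (C ⊔ Q) ≤
      numBlocks C + numBlocks ((C ⊔ Q) ⊔ pairSetoid u v) := by
  by_cases h : C.r u v
  · rw [sup_eq_left.mpr (pair_le h), sup_eq_left.mpr ((pair_le h).trans le_sup_left)]
  · have h1 : numBlocks (C ⊔ pairSetoid u v) + 1 ≤ numBlocks C :=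
      numBlocks_add_one_le (le_sup_left : C ≤ _) (rel_sup_right (pair_rel u v)) h
    have h2 := merge_lower (C ⊔ Q) u v
    omega

lemma merge_chain : ∀ (L : List (Fin n × Fin n)) (A Q : Setoid (Fin n)),
    numBlocks (A ⊔ joinPairs L) + numBlocks (A ⊔ Q) ≤
      numBlocks A + numBlocks ((A ⊔ Q) ⊔ joinPairs L) := by
  intro L
  induction L with
  | nil =>
      intro A Q
      show numBlocks (A ⊔ ⊥) + _ ≤ _ + numBlocks ((A ⊔ Q) ⊔ ⊥)
      rw [sup_bot_eq, sup_bot_eq]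
  | cons p L ih =>
      intro A Q
      have e1 : A ⊔ joinPairs (p :: L) = (A ⊔ pairSetoid p.1 p.2) ⊔ joinPairs L :=
        (sup_assoc _ _ _).symm
      have e2 : (A ⊔ Q) ⊔ joinPairs (p :: L) = (((A ⊔ Q) ⊔ pairSetoid p.1 p.2) ⊔ joinPairs L) := by
        show (A ⊔ Q) ⊔ (pairSetoid p.1 p.2 ⊔ joinPairs L) = _
        rw [← sup_assoc]
      rw [e1, e2]
      have h1 := ih (A ⊔ pairSetoid p.1 p.2) Q
      have h2 := merge_step A Q p.1 p.2
      rw [sup_right_comm A (pairSetoid p.1 p.2) Q] at h1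
      omega

lemma exists_joinPairs {A B : Setoid (Fin n)} (h : A ≤ B) :
    ∃ L : List (Fin n × Fin n), B = A ⊔ joinPairs L := by
  classical
  refine ⟨(List.finRange n ×ˢ List.finRange n).filter (fun p => decide (B.r p.1 p.2)), ?_⟩
  apply le_antisymm
  · intro x y hxy
    have hmem : (x, y) ∈ (List.finRange n ×ˢ List.finRange n).filter
        (fun p => decide (B.r p.1 p.2)) := by
      rw [List.mem_filter]
      exact ⟨List.mem_product.mpr ⟨List.mem_finRange x, List.mem_finRange y⟩,
        decide_eq_true hxy⟩
    exact rel_sup_right ((pair_le_joinPairs hmem) (pair_rel x y))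
  · refine sup_le h (joinPairs_le ?_)
    intro p hp
    exact of_decide_eq_true (List.mem_filter.mp hp).2

/-- Semimodularity-type inequality in the partition lattice. -/
lemma submod {A B : Setoid (Fin n)} (Q : Setoid (Fin n)) (h : A ≤ B) :
    numBlocks B + numBlocks (A ⊔ Q) ≤ numBlocks A + numBlocks (B ⊔ Q) := by
  obtain ⟨L, hL⟩ := exists_joinPairs h
  have hch := merge_chain L A Q
  rw [hL, sup_right_comm A (joinPairs L) Q]
  exact hch

/-- The genus-type inequality `#(π) + #(π⁻¹γ) + #(γ) ≤ n + 2#(π ∨ γ)`. -/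
lemma genus_aux : ∀ (k : ℕ) (π γ : Equiv.Perm (Fin n)), n ≤ numOrbits π + k →
    numOrbits π + numOrbits (π⁻¹ * γ) + numOrbits γ ≤
      n + 2 * numBlocks (orbitSetoid π ⊔ orbitSetoid γ) := by
  intro k
  induction k with
  | zero =>
      intro π γ hk
      have h1 : π = 1 := eq_one_of_numOrbits (by omega)
      subst h1
      rw [inv_one, one_mul, numOrbits_one]
      have e : orbitSetoid (1 : Equiv.Perm (Fin n)) ⊔ orbitSetoid γ = orbitSetoid γ := by
        rw [sup_eq_right]
        intro x y hxy
        rw [Equiv.Perm.sameCycle_one.mp hxy]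
      rw [e]
      simp only [numOrbits]
      omega
  | succ k ih =>
      intro π γ hk
      by_cases h1 : π = 1
      · subst h1
        rw [inv_one, one_mul, numOrbits_one]
        have e : orbitSetoid (1 : Equiv.Perm (Fin n)) ⊔ orbitSetoid γ = orbitSetoid γ := by
          rw [sup_eq_right]
          intro x y hxy
          rw [Equiv.Perm.sameCycle_one.mp hxy]
        rw [e]
        simp only [numOrbits]
        omega
      · have ⟨a, ha⟩ : ∃ a, π a ≠ a := by
          by_contra hc
          push_neg at hc
          exact h1 (Equiv.ext hc)
        set τ : Equiv.Perm (Fin n) := Equiv.swap a (π a) with hτ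
        set π' : Equiv.Perm (Fin n) := τ * π with hπ'
        have hsplit : numOrbits π' = numOrbits π + 1 := numOrbits_swap_apply_mul π ha
        have hIH := ih π' γ (by omega)
        set b : Fin n := π⁻¹ a with hb
        have hba : b ≠ a := by
          intro hc
          apply ha
          have : π b = a := by rw [hb]; exact Equiv.apply_symm_apply π a
          rw [hc] at this
          rw [this]
        have hconj : π'⁻¹ * γ = Equiv.swap b a * (π⁻¹ * γ) := by
          have hswap : Equiv.swap b a = π⁻¹ * τ * π := by
            rw [hτ, hb]
            have := Equiv.swap_apply_apply π⁻¹ a (π a)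
            rw [show π⁻¹ (π a) = a from Equiv.symm_apply_apply π a] at this
            simpa using this
          rw [hswap, hπ']
          have hτinv : τ⁻¹ = τ := by rw [hτ, Equiv.swap_inv]
          rw [mul_inv_rev, hτinv]
          group
        -- basic orbit relations
        have hπ'le : orbitSetoid π' ≤ orbitSetoid π := by
          rw [hπ']
          exact (orbit_swap_mul_le π a (π a)).trans
            (sup_le le_rfl (pair_le (sameCycle_step π a)))
        have hπle : orbitSetoid π ≤ orbitSetoid π' ⊔ pairSetoid a (π a) := by
          rw [hπ']
          exact orbit_le_swap_mul π a (π a)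
        by_cases hcase : (π⁻¹ * γ).SameCycle b a
        · -- case A: split
          have hsplit2 : numOrbits (π'⁻¹ * γ) = numOrbits (π⁻¹ * γ) + 1 := by
            rw [hconj]
            exact numOrbits_swap_mul_split hba hcase
          have e : orbitSetoid π ⊔ orbitSetoid γ =
              (orbitSetoid π' ⊔ orbitSetoid γ) ⊔ pairSetoid a (π a) := by
            apply le_antisymm
            · exact sup_le (hπle.trans (sup_le (le_sup_left.trans le_sup_left) le_sup_right))
                ((le_sup_right : orbitSetoid γ ≤ _).trans le_sup_left)
            · exact sup_le (sup_le (hπ'le.trans le_sup_left) le_sup_right)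
                (pair_le (rel_sup_left (sameCycle_step π a)))
          have hJ : numBlocks (orbitSetoid π' ⊔ orbitSetoid γ) ≤
              numBlocks (orbitSetoid π ⊔ orbitSetoid γ) + 1 := by
            rw [e]
            exact merge_lower _ a (π a)
          omega
        · -- case B: merge
          have hmerge : (π'⁻¹ * γ).SameCycle b a := by
            rw [hconj]
            exact sameCycle_swap_mul hba hcase
          have hest : numOrbits (π'⁻¹ * γ) + 1 = numOrbits (π⁻¹ * γ) := by
            rw [hconj]
            exact numOrbits_swap_mul_merge hba hcase
          have hrel_ba : (orbitSetoid π' ⊔ orbitSetoid γ).r b a := by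
            have h5 : orbitSetoid (π'⁻¹ * γ) ≤ orbitSetoid π' ⊔ orbitSetoid γ := by
              have := orbit_mul_le π'⁻¹ γ
              rwa [orbit_inv] at this
            exact h5 hmerge
          have hrel_bπa : (orbitSetoid π' ⊔ orbitSetoid γ).r b (π a) := by
            apply rel_sup_left
            have : π' b = π a := by
              rw [hπ', hb]
              simp [Equiv.Perm.mul_apply, show π (π⁻¹ a) = a from Equiv.apply_symm_apply π a, hτ,
                Equiv.swap_apply_left]
            exact this ▸ sameCycle_step π' b
          have hrel_aπa : (orbitSetoid π' ⊔ orbitSetoid γ).r a (π a) :=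
            (orbitSetoid π' ⊔ orbitSetoid γ).trans'
              ((orbitSetoid π' ⊔ orbitSetoid γ).symm' hrel_ba) hrel_bπa
          have hJeq : orbitSetoid π' ⊔ orbitSetoid γ = orbitSetoid π ⊔ orbitSetoid γ := by
            apply le_antisymm
            · exact sup_le (hπ'le.trans le_sup_left) le_sup_right
            · refine sup_le ?_ le_sup_right
              refine hπle.trans (sup_le le_sup_left (pair_le hrel_aπa))
          rw [hJeq] at hIH
          omega

lemma genus_ineq (π γ : Equiv.Perm (Fin n)) :
    numOrbits π + numOrbits (π⁻¹ * γ) + numOrbits γ ≤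
      n + 2 * numBlocks (orbitSetoid π ⊔ orbitSetoid γ) :=
  genus_aux n π γ (by omega)

lemma orbit_sup_inv_mul (π γ : Equiv.Perm (Fin n)) :
    orbitSetoid (π⁻¹ * γ) ⊔ orbitSetoid γ = orbitSetoid π ⊔ orbitSetoid γ := by
  apply le_antisymm
  · refine sup_le ?_ le_sup_right
    have h := orbit_mul_le π⁻¹ γ
    rw [orbit_inv] at h
    exact h
  · refine sup_le ?_ le_sup_right
    have e : π = γ * (π⁻¹ * γ)⁻¹ := by group
    have h := orbit_mul_le γ (π⁻¹ * γ)⁻¹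
    rw [orbit_inv] at h
    calc orbitSetoid π = orbitSetoid (γ * (π⁻¹ * γ)⁻¹) := by rw [← e]
      _ ≤ orbitSetoid γ ⊔ orbitSetoid (π⁻¹ * γ) := h
      _ ≤ orbitSetoid (π⁻¹ * γ) ⊔ orbitSetoid γ := sup_le le_sup_right le_sup_left

lemma orbit_le_sup_mul (π γ : Equiv.Perm (Fin n)) :
    orbitSetoid γ ≤ orbitSetoid π ⊔ orbitSetoid (π⁻¹ * γ) := by
  have e : γ = π * (π⁻¹ * γ) := by group
  calc orbitSetoid γ = orbitSetoid (π * (π⁻¹ * γ)) := by rw [← e]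
    _ ≤ orbitSetoid π ⊔ orbitSetoid (π⁻¹ * γ) := orbit_mul_le _ _


end Aux

/-- equality in the triangle inequality. -/
theorem statement2 (n : ℕ) (hn : 1 ≤ n) (π γ : Equiv.Perm (Fin n))
    (V W : Setoid (Fin n))
    (hπV : orbitSetoid π ≤ V) (hW : orbitSetoid (π⁻¹ * γ) ≤ W)
    (heq : (2 * setoidLength V - permLength π) +
        (2 * setoidLength W - permLength (π⁻¹ * γ)) =
      2 * setoidLength (V ⊔ W) - permLength γ) :
    (permLength π + permLength (π⁻¹ * γ) + permLength γ =
      2 * setoidLength (orbitSetoid π ⊔ orbitSetoid γ)) ∧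
    (setoidLength (V ⊔ orbitSetoid γ) - setoidLength (orbitSetoid π ⊔ orbitSetoid γ) =
      setoidLength V - permLength π) ∧
    (setoidLength (W ⊔ orbitSetoid γ) - setoidLength (orbitSetoid π ⊔ orbitSetoid γ) =
      setoidLength W - permLength (π⁻¹ * γ)) ∧
    ((setoidLength V - permLength π) + (setoidLength W - permLength (π⁻¹ * γ)) =
      setoidLength (V ⊔ W) - setoidLength (orbitSetoid π ⊔ orbitSetoid γ)) := by
  have hγVW : orbitSetoid γ ≤ V ⊔ W := (orbit_le_sup_mul π γ).trans (sup_le_sup hπV hW)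
  have hb1 := submod (orbitSetoid γ) hπV
  have hb2 := submod (orbitSetoid γ) hW
  rw [orbit_sup_inv_mul π γ] at hb2
  have hb3 := submod (V ⊔ orbitSetoid γ) hW
  have eA : orbitSetoid (π⁻¹ * γ) ⊔ (V ⊔ orbitSetoid γ) = V ⊔ orbitSetoid γ := by
    refine sup_eq_right.mpr ?_
    exact le_sup_left.trans ((le_of_eq (orbit_sup_inv_mul π γ)).trans (sup_le_sup_right hπV _))
  have eB : W ⊔ (V ⊔ orbitSetoid γ) = V ⊔ W := by
    rw [← sup_assoc, sup_comm W V, sup_eq_left.mpr hγVW]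
  rw [eA, eB] at hb3
  have hb4 := submod (W ⊔ orbitSetoid γ) hπV
  have eC : orbitSetoid π ⊔ (W ⊔ orbitSetoid γ) = W ⊔ orbitSetoid γ := by
    refine sup_eq_right.mpr ?_
    exact le_sup_left.trans ((le_of_eq (orbit_sup_inv_mul π γ).symm).trans
      (sup_le_sup_right hW _))
  have eD : V ⊔ (W ⊔ orbitSetoid γ) = V ⊔ W := by
    rw [← sup_assoc, sup_eq_left.mpr hγVW]
  rw [eC, eD] at hb4
  have ha := genus_ineq π γ
  have c1 := numBlocks_le_card V
  have c2 := numBlocks_le_card (orbitSetoid π)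
  simp only [numOrbits] at ha
  simp only [setoidLength, permLength, numOrbits] at heq ⊢
  refine ⟨by omega, by omega, by omega, by omega⟩


end WignerPaper
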